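/- Let L be a smooth Nijenhuis operator defined on an open neighborhood U of a point p ∈ ℝ³, with characteristic polynomial coefficients σ₁, σ₂, σ₃. Suppose dσ₁(p) ≠ 0, and suppose that at every point q in some neighborhood of p the differentials dσ₂(q) and dσ₃(q) are scalar multiples of dσ₁(q). Then, setting x = −σ₁ = tr L, there is a neighborhood of p on which one of the following three alternatives holds identically: (1) there exist α, γ ∈ ℝ with σ₂ = αx − γ − α² and σ₃ = γ(x − α) (so χ(t) = t³ − xt² + (αx − γ − α²)t + γ(x − α)); (2) σ₂ = x²/3 and σ₃ = −x³/27 (so χ(t) = t³ − xt² + (x²/3)t − x³/27); (3) there exists c ∈ ℝ with σ₂ = x²/4 − cx/3 − c²/3 and σ₃ = (c/6)(x + 2c/3)² (so χ(t) = t³ − xt² + (x²/4 − cx/3 − c²/3)t + (c/6)(x + 2c/3)²). -/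

import Mathlib

open Matrix Set

noncomputable section

/-- Points of ℝ³, identified with `Fin 3 → ℝ`. -/
abbrev E3 := Fin 3 → ℝ

/-- Lie bracket of vector fields on ℝ³: `[X,Y](p) = DY(p)(X(p)) − DX(p)(Y(p))`. -/
def VBracket (X Y : E3 → E3) : E3 → E3 :=
  fun p => fderiv ℝ Y p (X p) - fderiv ℝ X p (Y p)

/-- `L` is a Nijenhuis operator on `U`: the Nijenhuis torsion vanishes on
constant vector fields at every point of `U`. -/
def IsNijenhuisOn (L : E3 → (E3 →L[ℝ] E3)) (U : Set E3) : Prop :=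
  ∀ u v : E3, ∀ p ∈ U,
    VBracket (fun q => L q u) (fun q => L q v) p
      - L p (VBracket (fun q => L q u) (fun _ => v) p)
      - L p (VBracket (fun _ => u) (fun q => L q v) p) = 0

/-- Matrix of the operator `L p` in the standard basis. -/
def opMatrix (L : E3 → (E3 →L[ℝ] E3)) (p : E3) : Matrix (Fin 3) (Fin 3) ℝ :=
  LinearMap.toMatrix' (↑(L p) : E3 →ₗ[ℝ] E3)

/-- `σ1, σ2, σ3` are the coefficients of the characteristic polynomial of `L` on `U`:
`det (t·Id − L(p)) = t³ + σ₁(p) t² + σ₂(p) t + σ₃(p)`. -/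
def CharCoeffsOn (L : E3 → (E3 →L[ℝ] E3)) (U : Set E3) (σ1 σ2 σ3 : E3 → ℝ) : Prop :=
  ∀ p ∈ U, ∀ t : ℝ,
    (t • (1 : Matrix (Fin 3) (Fin 3) ℝ) - opMatrix L p).det
      = t ^ 3 + σ1 p * t ^ 2 + σ2 p * t + σ3 p

set_option maxRecDepth 20000
set_option maxHeartbeats 1000000

def ee (i : Fin 3) : E3 := Pi.single i 1

lemma vec_eq_sum (v : E3) : v = v 0 • ee 0 + v 1 • ee 1 + v 2 • ee 2 := by
  funext i; fin_cases i <;> simp [ee, Pi.single_apply]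

lemma clm_expand {F : Type*} [NormedAddCommGroup F] [NormedSpace ℝ F]
    (T : E3 →L[ℝ] F) (v : E3) : T v = v 0 • T (ee 0) + v 1 • T (ee 1) + v 2 • T (ee 2) := by
  conv_lhs => rw [vec_eq_sum v]; simp

lemma clm_apply_expand (T : E3 →L[ℝ] E3) (v : E3) (i : Fin 3) :
    T v i = v 0 * T (ee 0) i + v 1 * T (ee 1) i + v 2 * T (ee 2) i := by
  rw [clm_expand T v]; simp

lemma opMatrix_apply (L : E3 → (E3 →L[ℝ] E3)) (q : E3) (i j : Fin 3) :
    opMatrix L q i j = L q (ee j) i := by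
  rw [opMatrix, LinearMap.toMatrix'_apply]
  have h : (fun j' => if j' = j then (1:ℝ) else 0) = ee j := by
    funext j'; simp [ee, Pi.single_apply]
  rfl

lemma sigma_vals {L : E3 → (E3 →L[ℝ] E3)} {U : Set E3} {σ1 σ2 σ3 : E3 → ℝ}
    (hσ : CharCoeffsOn L U σ1 σ2 σ3) {q : E3} (hq : q ∈ U) :
    σ1 q = -(L q (ee 0) 0 + L q (ee 1) 1 + L q (ee 2) 2) ∧ σ2 q = (L q (ee 0) 0 * L q (ee 1) 1 - L q (ee 1) 0 * L q (ee 0) 1) + (L q (ee 0) 0 * L q (ee 2) 2 - L q (ee 2) 0 * L q (ee 0) 2) + (L q (ee 1) 1 * L q (ee 2) 2 - L q (ee 2) 1 * L q (ee 1) 2) ∧ σ3 q = -(L q (ee 0) 0 * (L q (ee 1) 1 * L q (ee 2) 2 - L q (ee 2) 1 * L q (ee 1) 2) - L q (ee 1) 0 * (L q (ee 0) 1 * L q (ee 2) 2 - L q (ee 2) 1 * L q (ee 0) 2) + L q (ee 2) 0 * (L q (ee 0) 1 * L q (ee 1) 2 - L q (ee 1) 1 * L q (ee 0) 2)) := by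
  have h0 := hσ q hq 0
  have h1 := hσ q hq 1
  have hm := hσ q hq (-1)
  simp only [Matrix.det_fin_three, Matrix.sub_apply, Matrix.smul_apply, Matrix.one_apply,
    opMatrix_apply, smul_eq_mul, Fin.isValue] at h0 h1 hm
  norm_num [Fin.ext_iff] at h0 h1 hm
  refine ⟨by linear_combination h0 - h1/2 - hm/2, by linear_combination hm/2 - h1/2,
    by linear_combination -h0⟩

theorem cert_R (A : Fin 3 → Fin 3 → ℝ) (D : Fin 3 → Fin 3 → Fin 3 → ℝ) (w : Fin 3 → ℝ)
    (hN : ∀ i j k : Fin 3, A 0 j * D i k 0 + A 1 j * D i k 1 + A 2 j * D i k 2 - (A 0 k * D i j 0 + A 1 k * D i j 1 + A 2 k * D i j 2) + (A i 0 * D 0 j k + A i 1 * D 1 j k + A i 2 * D 2 j k) - (A i 0 * D 0 k j + A i 1 * D 1 k j + A i 2 * D 2 k j) = 0) :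
    ((-(((A 0 0 * w 0 + A 0 1 * w 1 + A 0 2 * w 2) * D 0 0 0 + (A 1 0 * w 0 + A 1 1 * w 1 + A 1 2 * w 2) * D 0 0 1 + (A 2 0 * w 0 + A 2 1 * w 1 + A 2 2 * w 2) * D 0 0 2) + ((A 0 0 * w 0 + A 0 1 * w 1 + A 0 2 * w 2) * D 1 1 0 + (A 1 0 * w 0 + A 1 1 * w 1 + A 1 2 * w 2) * D 1 1 1 + (A 2 0 * w 0 + A 2 1 * w 1 + A 2 2 * w 2) * D 1 1 2) + ((A 0 0 * w 0 + A 0 1 * w 1 + A 0 2 * w 2) * D 2 2 0 + (A 1 0 * w 0 + A 1 1 * w 1 + A 1 2 * w 2) * D 2 2 1 + (A 2 0 * w 0 + A 2 1 * w 1 + A 2 2 * w 2) * D 2 2 2))) - (((w 0 * D 0 0 0 + w 1 * D 0 0 1 + w 2 * D 0 0 2) * A 1 1 + A 0 0 * (w 0 * D 1 1 0 + w 1 * D 1 1 1 + w 2 * D 1 1 2)) + ((w 0 * D 0 0 0 + w 1 * D 0 0 1 + w 2 * D 0 0 2) * A 2 2 + A 0 0 * (w 0 * D 2 2 0 + w 1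 * D 2 2 1 + w 2 * D 2 2 2)) + ((w 0 * D 1 1 0 + w 1 * D 1 1 1 + w 2 * D 1 1 2) * A 2 2 + A 1 1 * (w 0 * D 2 2 0 + w 1 * D 2 2 1 + w 2 * D 2 2 2)) + (-((w 0 * D 0 1 0 + w 1 * D 0 1 1 + w 2 * D 0 1 2) * A 1 0 + A 0 1 * (w 0 * D 1 0 0 + w 1 * D 1 0 1 + w 2 * D 1 0 2))) + (-((w 0 * D 0 2 0 + w 1 * D 0 2 1 + w 2 * D 0 2 2) * A 2 0 + A 0 2 * (w 0 * D 2 0 0 + w 1 * D 2 0 1 + w 2 * D 2 0 2))) + (-((w 0 * D 1 2 0 + w 1 * D 1 2 1 + w 2 * D 1 2 2) * A 2 1 + A 1 2 * (w 0 * D 2 1 0 + w 1 * D 2 1 1 + w 2 * D 2 1 2)))) + (-(A 0 0 + A 1 1 + A 2 2)) * (-((w 0 * D 0 0 0 + w 1 * D 0 0 1 + w 2 * D 0 0 2) + (w 0 * D 1 1 0 + w 1 * D 1 1 1 + w 2 * D 1 1 2) + (w 0 * D 2 2 0 + w 1 * D 2 2 1 + w 2 * D 2 2 2))) = 0) ∧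 (((((A 0 0 * w 0 + A 0 1 * w 1 + A 0 2 * w 2) * D 0 0 0 + (A 1 0 * w 0 + A 1 1 * w 1 + A 1 2 * w 2) * D 0 0 1 + (A 2 0 * w 0 + A 2 1 * w 1 + A 2 2 * w 2) * D 0 0 2) * A 1 1 + A 0 0 * ((A 0 0 * w 0 + A 0 1 * w 1 + A 0 2 * w 2) * D 1 1 0 + (A 1 0 * w 0 + A 1 1 * w 1 + A 1 2 * w 2) * D 1 1 1 + (A 2 0 * w 0 + A 2 1 * w 1 + A 2 2 * w 2) * D 1 1 2)) + (((A 0 0 * w 0 + A 0 1 * w 1 + A 0 2 * w 2) * D 0 0 0 + (A 1 0 * w 0 + A 1 1 * w 1 + A 1 2 * w 2) * D 0 0 1 + (A 2 0 * w 0 + A 2 1 * w 1 + A 2 2 * w 2) * D 0 0 2) * A 2 2 + A 0 0 * ((A 0 0 * w 0 + A 0 1 * w 1 + A 0 2 * w 2) * D 2 2 0 + (A 1 0 * w 0 + A 1 1 * w 1 + A 1 2 * w 2) * D 2 2 1 + (A 2 0 * w 0 + A 2 1 * w 1 + A 2 2 * w 2) * D 2 2 2)) + (((A 0 0 * w 0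 + A 0 1 * w 1 + A 0 2 * w 2) * D 1 1 0 + (A 1 0 * w 0 + A 1 1 * w 1 + A 1 2 * w 2) * D 1 1 1 + (A 2 0 * w 0 + A 2 1 * w 1 + A 2 2 * w 2) * D 1 1 2) * A 2 2 + A 1 1 * ((A 0 0 * w 0 + A 0 1 * w 1 + A 0 2 * w 2) * D 2 2 0 + (A 1 0 * w 0 + A 1 1 * w 1 + A 1 2 * w 2) * D 2 2 1 + (A 2 0 * w 0 + A 2 1 * w 1 + A 2 2 * w 2) * D 2 2 2)) + (-(((A 0 0 * w 0 + A 0 1 * w 1 + A 0 2 * w 2) * D 0 1 0 + (A 1 0 * w 0 + A 1 1 * w 1 + A 1 2 * w 2) * D 0 1 1 + (A 2 0 * w 0 + A 2 1 * w 1 + A 2 2 * w 2) * D 0 1 2) * A 1 0 + A 0 1 * ((A 0 0 * w 0 + A 0 1 * w 1 + A 0 2 * w 2) * D 1 0 0 + (A 1 0 * w 0 + A 1 1 * w 1 + A 1 2 * w 2) * D 1 0 1 + (A 2 0 * w 0 + A 2 1 * w 1 + A 2 2 * w 2) * D 1 0 2))) + (-(((A 0 0 * w 0 + A 0 1 * w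 1 + A 0 2 * w 2) * D 0 2 0 + (A 1 0 * w 0 + A 1 1 * w 1 + A 1 2 * w 2) * D 0 2 1 + (A 2 0 * w 0 + A 2 1 * w 1 + A 2 2 * w 2) * D 0 2 2) * A 2 0 + A 0 2 * ((A 0 0 * w 0 + A 0 1 * w 1 + A 0 2 * w 2) * D 2 0 0 + (A 1 0 * w 0 + A 1 1 * w 1 + A 1 2 * w 2) * D 2 0 1 + (A 2 0 * w 0 + A 2 1 * w 1 + A 2 2 * w 2) * D 2 0 2))) + (-(((A 0 0 * w 0 + A 0 1 * w 1 + A 0 2 * w 2) * D 1 2 0 + (A 1 0 * w 0 + A 1 1 * w 1 + A 1 2 * w 2) * D 1 2 1 + (A 2 0 * w 0 + A 2 1 * w 1 + A 2 2 * w 2) * D 1 2 2) * A 2 1 + A 1 2 * ((A 0 0 * w 0 + A 0 1 * w 1 + A 0 2 * w 2) * D 2 1 0 + (A 1 0 * w 0 + A 1 1 * w 1 + A 1 2 * w 2) * D 2 1 1 + (A 2 0 * w 0 + A 2 1 * w 1 + A 2 2 * w 2) * D 2 1 2)))) - (-(0 + ((w 0 * D 0 0 0 + w 1 * D 0 0 1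 + w 2 * D 0 0 2) * A 1 1 * A 2 2) + (A 0 0 * (w 0 * D 1 1 0 + w 1 * D 1 1 1 + w 2 * D 1 1 2) * A 2 2) + (A 0 0 * A 1 1 * (w 0 * D 2 2 0 + w 1 * D 2 2 1 + w 2 * D 2 2 2)) - ((w 0 * D 0 0 0 + w 1 * D 0 0 1 + w 2 * D 0 0 2) * A 1 2 * A 2 1) - (A 0 0 * (w 0 * D 1 2 0 + w 1 * D 1 2 1 + w 2 * D 1 2 2) * A 2 1) - (A 0 0 * A 1 2 * (w 0 * D 2 1 0 + w 1 * D 2 1 1 + w 2 * D 2 1 2)) - ((w 0 * D 0 1 0 + w 1 * D 0 1 1 + w 2 * D 0 1 2) * A 1 0 * A 2 2) - (A 0 1 * (w 0 * D 1 0 0 + w 1 * D 1 0 1 + w 2 * D 1 0 2) * A 2 2) - (A 0 1 * A 1 0 * (w 0 * D 2 2 0 + w 1 * D 2 2 1 + w 2 * D 2 2 2)) + ((w 0 * D 0 1 0 + w 1 * D 0 1 1 + w 2 * D 0 1 2) * A 1 2 * A 2 0) + (A 0 1 * (w 0 * D 1 2 0 + w 1 * D 1 2 1 + w 2 * D 1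 2 2) * A 2 0) + (A 0 1 * A 1 2 * (w 0 * D 2 0 0 + w 1 * D 2 0 1 + w 2 * D 2 0 2)) + ((w 0 * D 0 2 0 + w 1 * D 0 2 1 + w 2 * D 0 2 2) * A 1 0 * A 2 1) + (A 0 2 * (w 0 * D 1 0 0 + w 1 * D 1 0 1 + w 2 * D 1 0 2) * A 2 1) + (A 0 2 * A 1 0 * (w 0 * D 2 1 0 + w 1 * D 2 1 1 + w 2 * D 2 1 2)) - ((w 0 * D 0 2 0 + w 1 * D 0 2 1 + w 2 * D 0 2 2) * A 1 1 * A 2 0) - (A 0 2 * (w 0 * D 1 1 0 + w 1 * D 1 1 1 + w 2 * D 1 1 2) * A 2 0) - (A 0 2 * A 1 1 * (w 0 * D 2 0 0 + w 1 * D 2 0 1 + w 2 * D 2 0 2)))) + ((A 0 0 * A 1 1 - A 0 1 * A 1 0) + (A 0 0 * A 2 2 - A 0 2 * A 2 0) + (A 1 1 * A 2 2 - A 1 2 * A 2 1)) * (-((w 0 * D 0 0 0 + w 1 * D 0 0 1 + w 2 * D 0 0 2) + (w 0 * D 1 1 0 + w 1 * D 1 1 1 + w 2 * D 1 1 2) +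 (w 0 * D 2 2 0 + w 1 * D 2 2 1 + w 2 * D 2 2 2))) = 0) ∧ ((-(0 + (((A 0 0 * w 0 + A 0 1 * w 1 + A 0 2 * w 2) * D 0 0 0 + (A 1 0 * w 0 + A 1 1 * w 1 + A 1 2 * w 2) * D 0 0 1 + (A 2 0 * w 0 + A 2 1 * w 1 + A 2 2 * w 2) * D 0 0 2) * A 1 1 * A 2 2) + (A 0 0 * ((A 0 0 * w 0 + A 0 1 * w 1 + A 0 2 * w 2) * D 1 1 0 + (A 1 0 * w 0 + A 1 1 * w 1 + A 1 2 * w 2) * D 1 1 1 + (A 2 0 * w 0 + A 2 1 * w 1 + A 2 2 * w 2) * D 1 1 2) * A 2 2) + (A 0 0 * A 1 1 * ((A 0 0 * w 0 + A 0 1 * w 1 + A 0 2 * w 2) * D 2 2 0 + (A 1 0 * w 0 + A 1 1 * w 1 + A 1 2 * w 2) * D 2 2 1 + (A 2 0 * w 0 + A 2 1 * w 1 + A 2 2 * w 2) * D 2 2 2)) - (((A 0 0 * w 0 + A 0 1 * w 1 + A 0 2 * w 2) * D 0 0 0 + (A 1 0 * w 0 + A 1 1 * w 1 + A 1 2 *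 w 2) * D 0 0 1 + (A 2 0 * w 0 + A 2 1 * w 1 + A 2 2 * w 2) * D 0 0 2) * A 1 2 * A 2 1) - (A 0 0 * ((A 0 0 * w 0 + A 0 1 * w 1 + A 0 2 * w 2) * D 1 2 0 + (A 1 0 * w 0 + A 1 1 * w 1 + A 1 2 * w 2) * D 1 2 1 + (A 2 0 * w 0 + A 2 1 * w 1 + A 2 2 * w 2) * D 1 2 2) * A 2 1) - (A 0 0 * A 1 2 * ((A 0 0 * w 0 + A 0 1 * w 1 + A 0 2 * w 2) * D 2 1 0 + (A 1 0 * w 0 + A 1 1 * w 1 + A 1 2 * w 2) * D 2 1 1 + (A 2 0 * w 0 + A 2 1 * w 1 + A 2 2 * w 2) * D 2 1 2)) - (((A 0 0 * w 0 + A 0 1 * w 1 + A 0 2 * w 2) * D 0 1 0 + (A 1 0 * w 0 + A 1 1 * w 1 + A 1 2 * w 2) * D 0 1 1 + (A 2 0 * w 0 + A 2 1 * w 1 + A 2 2 * w 2) * D 0 1 2) * A 1 0 * A 2 2) - (A 0 1 * ((A 0 0 * w 0 + A 0 1 * w 1 + A 0 2 * w 2) * D 1 0 0 + (A 1 0 *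 w 0 + A 1 1 * w 1 + A 1 2 * w 2) * D 1 0 1 + (A 2 0 * w 0 + A 2 1 * w 1 + A 2 2 * w 2) * D 1 0 2) * A 2 2) - (A 0 1 * A 1 0 * ((A 0 0 * w 0 + A 0 1 * w 1 + A 0 2 * w 2) * D 2 2 0 + (A 1 0 * w 0 + A 1 1 * w 1 + A 1 2 * w 2) * D 2 2 1 + (A 2 0 * w 0 + A 2 1 * w 1 + A 2 2 * w 2) * D 2 2 2)) + (((A 0 0 * w 0 + A 0 1 * w 1 + A 0 2 * w 2) * D 0 1 0 + (A 1 0 * w 0 + A 1 1 * w 1 + A 1 2 * w 2) * D 0 1 1 + (A 2 0 * w 0 + A 2 1 * w 1 + A 2 2 * w 2) * D 0 1 2) * A 1 2 * A 2 0) + (A 0 1 * ((A 0 0 * w 0 + A 0 1 * w 1 + A 0 2 * w 2) * D 1 2 0 + (A 1 0 * w 0 + A 1 1 * w 1 + A 1 2 * w 2) * D 1 2 1 + (A 2 0 * w 0 + A 2 1 * w 1 + A 2 2 * w 2) * D 1 2 2) * A 2 0) + (A 0 1 * A 1 2 * ((A 0 0 * w 0 + A 0 1 * w 1 + A 0 2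 * w 2) * D 2 0 0 + (A 1 0 * w 0 + A 1 1 * w 1 + A 1 2 * w 2) * D 2 0 1 + (A 2 0 * w 0 + A 2 1 * w 1 + A 2 2 * w 2) * D 2 0 2)) + (((A 0 0 * w 0 + A 0 1 * w 1 + A 0 2 * w 2) * D 0 2 0 + (A 1 0 * w 0 + A 1 1 * w 1 + A 1 2 * w 2) * D 0 2 1 + (A 2 0 * w 0 + A 2 1 * w 1 + A 2 2 * w 2) * D 0 2 2) * A 1 0 * A 2 1) + (A 0 2 * ((A 0 0 * w 0 + A 0 1 * w 1 + A 0 2 * w 2) * D 1 0 0 + (A 1 0 * w 0 + A 1 1 * w 1 + A 1 2 * w 2) * D 1 0 1 + (A 2 0 * w 0 + A 2 1 * w 1 + A 2 2 * w 2) * D 1 0 2) * A 2 1) + (A 0 2 * A 1 0 * ((A 0 0 * w 0 + A 0 1 * w 1 + A 0 2 * w 2) * D 2 1 0 + (A 1 0 * w 0 + A 1 1 * w 1 + A 1 2 * w 2) * D 2 1 1 + (A 2 0 * w 0 + A 2 1 * w 1 + A 2 2 * w 2) * D 2 1 2)) - (((A 0 0 * w 0 + A 0 1 * w 1 + A 0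 2 * w 2) * D 0 2 0 + (A 1 0 * w 0 + A 1 1 * w 1 + A 1 2 * w 2) * D 0 2 1 + (A 2 0 * w 0 + A 2 1 * w 1 + A 2 2 * w 2) * D 0 2 2) * A 1 1 * A 2 0) - (A 0 2 * ((A 0 0 * w 0 + A 0 1 * w 1 + A 0 2 * w 2) * D 1 1 0 + (A 1 0 * w 0 + A 1 1 * w 1 + A 1 2 * w 2) * D 1 1 1 + (A 2 0 * w 0 + A 2 1 * w 1 + A 2 2 * w 2) * D 1 1 2) * A 2 0) - (A 0 2 * A 1 1 * ((A 0 0 * w 0 + A 0 1 * w 1 + A 0 2 * w 2) * D 2 0 0 + (A 1 0 * w 0 + A 1 1 * w 1 + A 1 2 * w 2) * D 2 0 1 + (A 2 0 * w 0 + A 2 1 * w 1 + A 2 2 * w 2) * D 2 0 2)))) + (-(0 + (A 0 0 * A 1 1 * A 2 2) - (A 0 0 * A 1 2 * A 2 1) - (A 0 1 * A 1 0 * A 2 2) + (A 0 1 * A 1 2 * A 2 0) + (A 0 2 * A 1 0 * A 2 1) - (A 0 2 * A 1 1 * A 2 0))) * (-((w 0 * D 0 0 0 + w 1 * D 0 0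 1 + w 2 * D 0 0 2) + (w 0 * D 1 1 0 + w 1 * D 1 1 1 + w 2 * D 1 1 2) + (w 0 * D 2 2 0 + w 1 * D 2 2 1 + w 2 * D 2 2 2))) = 0) := by
  refine ⟨?_, ?_, ?_⟩
  · linear_combination ((-1 : ℝ) * w 0) * hN 0 0 0 + ((-1 : ℝ) * w 1) * hN 0 1 0 + ((-1 : ℝ) * w 2) * hN 0 2 0 + ((-1 : ℝ) * w 0) * hN 1 0 1 + ((-1 : ℝ) * w 1) * hN 1 1 1 + ((-1 : ℝ) * w 2) * hN 1 2 1 + ((-1 : ℝ) * w 0) * hN 2 0 2 + ((-1 : ℝ) * w 1) * hN 2 1 2 + ((-1 : ℝ) * w 2) * hN 2 2 2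
  · linear_combination (((A 0 0 + A 1 1 + A 2 2) - A 0 0) * w 0) * hN 0 0 0 + (((A 0 0 + A 1 1 + A 2 2) - A 0 0) * w 1) * hN 0 1 0 + (((A 0 0 + A 1 1 + A 2 2) - A 0 0) * w 2) * hN 0 2 0 + ((-A 1 0) * w 0) * hN 0 0 1 + ((-A 1 0) * w 1) * hN 0 1 1 + ((-A 1 0) * w 2) * hN 0 2 1 + ((-A 2 0) * w 0) * hN 0 0 2 + ((-A 2 0) * w 1) * hN 0 1 2 + ((-A 2 0) * w 2) * hN 0 2 2 + ((-A 0 1) * w 0) * hN 1 0 0 + ((-A 0 1) * w 1) * hN 1 1 0 + ((-A 0 1) * w 2) * hN 1 2 0 + (((A 0 0 + A 1 1 + A 2 2) - A 1 1) * w 0) * hN 1 0 1 + (((A 0 0 + A 1 1 + A 2 2) - A 1 1) * w 1) * hN 1 1 1 + (((A 0 0 + A 1 1 + A 2 2) - A 1 1) * w 2) * hN 1 2 1 + ((-A 2 1) * w 0) * hN 1 0 2 + ((-A 2 1) * w 1) * hN 1 1 2 + ((-A 2 1) * w 2) * hN 1 2 2 + ((-A 0 2) * w 0) * hN 2 0 0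 + ((-A 0 2) * w 1) * hN 2 1 0 + ((-A 0 2) * w 2) * hN 2 2 0 + ((-A 1 2) * w 0) * hN 2 0 1 + ((-A 1 2) * w 1) * hN 2 1 1 + ((-A 1 2) * w 2) * hN 2 2 1 + (((A 0 0 + A 1 1 + A 2 2) - A 2 2) * w 0) * hN 2 0 2 + (((A 0 0 + A 1 1 + A 2 2) - A 2 2) * w 1) * hN 2 1 2 + (((A 0 0 + A 1 1 + A 2 2) - A 2 2) * w 2) * hN 2 2 2
  · linear_combination ((-((A 0 0 * A 1 1 - A 0 1 * A 1 0) + (A 0 0 * A 2 2 - A 0 2 * A 2 0) + (A 1 1 * A 2 2 - A 1 2 * A 2 1)) + (A 0 0 + A 1 1 + A 2 2) * A 0 0 - (A 0 0 * A 0 0 + A 0 1 * A 1 0 + A 0 2 * A 2 0)) * w 0) * hN 0 0 0 + ((-((A 0 0 * A 1 1 - A 0 1 * A 1 0) + (A 0 0 * A 2 2 - A 0 2 * A 2 0) + (A 1 1 * A 2 2 - A 1 2 * A 2 1)) + (A 0 0 + A 1 1 + A 2 2) * A 0 0 - (A 0 0 * A 0 0 + A 0 1 * A 1 0 + A 0 2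 * A 2 0)) * w 1) * hN 0 1 0 + ((-((A 0 0 * A 1 1 - A 0 1 * A 1 0) + (A 0 0 * A 2 2 - A 0 2 * A 2 0) + (A 1 1 * A 2 2 - A 1 2 * A 2 1)) + (A 0 0 + A 1 1 + A 2 2) * A 0 0 - (A 0 0 * A 0 0 + A 0 1 * A 1 0 + A 0 2 * A 2 0)) * w 2) * hN 0 2 0 + (((A 0 0 + A 1 1 + A 2 2) * A 1 0 - (A 1 0 * A 0 0 + A 1 1 * A 1 0 + A 1 2 * A 2 0)) * w 0) * hN 0 0 1 + (((A 0 0 + A 1 1 + A 2 2) * A 1 0 - (A 1 0 * A 0 0 + A 1 1 * A 1 0 + A 1 2 * A 2 0)) * w 1) * hN 0 1 1 + (((A 0 0 + A 1 1 + A 2 2) * A 1 0 - (A 1 0 * A 0 0 + A 1 1 * A 1 0 + A 1 2 * A 2 0)) * w 2) * hN 0 2 1 + (((A 0 0 + A 1 1 + A 2 2) * A 2 0 - (A 2 0 * A 0 0 + A 2 1 * A 1 0 + A 2 2 * A 2 0)) * w 0) * hN 0 0 2 + (((A 0 0 + A 1 1 + A 2 2) * A 2 0 - (A 2 0 * A 0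 0 + A 2 1 * A 1 0 + A 2 2 * A 2 0)) * w 1) * hN 0 1 2 + (((A 0 0 + A 1 1 + A 2 2) * A 2 0 - (A 2 0 * A 0 0 + A 2 1 * A 1 0 + A 2 2 * A 2 0)) * w 2) * hN 0 2 2 + (((A 0 0 + A 1 1 + A 2 2) * A 0 1 - (A 0 0 * A 0 1 + A 0 1 * A 1 1 + A 0 2 * A 2 1)) * w 0) * hN 1 0 0 + (((A 0 0 + A 1 1 + A 2 2) * A 0 1 - (A 0 0 * A 0 1 + A 0 1 * A 1 1 + A 0 2 * A 2 1)) * w 1) * hN 1 1 0 + (((A 0 0 + A 1 1 + A 2 2) * A 0 1 - (A 0 0 * A 0 1 + A 0 1 * A 1 1 + A 0 2 * A 2 1)) * w 2) * hN 1 2 0 + ((-((A 0 0 * A 1 1 - A 0 1 * A 1 0) + (A 0 0 * A 2 2 - A 0 2 * A 2 0) + (A 1 1 * A 2 2 - A 1 2 * A 2 1)) + (A 0 0 + A 1 1 + A 2 2) * A 1 1 - (A 1 0 * A 0 1 + A 1 1 * A 1 1 + A 1 2 * A 2 1)) * w 0) * hN 1 0 1 + ((-((A 0 0 * A 1 1 -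 A 0 1 * A 1 0) + (A 0 0 * A 2 2 - A 0 2 * A 2 0) + (A 1 1 * A 2 2 - A 1 2 * A 2 1)) + (A 0 0 + A 1 1 + A 2 2) * A 1 1 - (A 1 0 * A 0 1 + A 1 1 * A 1 1 + A 1 2 * A 2 1)) * w 1) * hN 1 1 1 + ((-((A 0 0 * A 1 1 - A 0 1 * A 1 0) + (A 0 0 * A 2 2 - A 0 2 * A 2 0) + (A 1 1 * A 2 2 - A 1 2 * A 2 1)) + (A 0 0 + A 1 1 + A 2 2) * A 1 1 - (A 1 0 * A 0 1 + A 1 1 * A 1 1 + A 1 2 * A 2 1)) * w 2) * hN 1 2 1 + (((A 0 0 + A 1 1 + A 2 2) * A 2 1 - (A 2 0 * A 0 1 + A 2 1 * A 1 1 + A 2 2 * A 2 1)) * w 0) * hN 1 0 2 + (((A 0 0 + A 1 1 + A 2 2) * A 2 1 - (A 2 0 * A 0 1 + A 2 1 * A 1 1 + A 2 2 * A 2 1)) * w 1) * hN 1 1 2 + (((A 0 0 + A 1 1 + A 2 2) * A 2 1 - (A 2 0 * A 0 1 + A 2 1 * A 1 1 + A 2 2 * A 2 1)) * w 2) * hN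 1 2 2 + (((A 0 0 + A 1 1 + A 2 2) * A 0 2 - (A 0 0 * A 0 2 + A 0 1 * A 1 2 + A 0 2 * A 2 2)) * w 0) * hN 2 0 0 + (((A 0 0 + A 1 1 + A 2 2) * A 0 2 - (A 0 0 * A 0 2 + A 0 1 * A 1 2 + A 0 2 * A 2 2)) * w 1) * hN 2 1 0 + (((A 0 0 + A 1 1 + A 2 2) * A 0 2 - (A 0 0 * A 0 2 + A 0 1 * A 1 2 + A 0 2 * A 2 2)) * w 2) * hN 2 2 0 + (((A 0 0 + A 1 1 + A 2 2) * A 1 2 - (A 1 0 * A 0 2 + A 1 1 * A 1 2 + A 1 2 * A 2 2)) * w 0) * hN 2 0 1 + (((A 0 0 + A 1 1 + A 2 2) * A 1 2 - (A 1 0 * A 0 2 + A 1 1 * A 1 2 + A 1 2 * A 2 2)) * w 1) * hN 2 1 1 + (((A 0 0 + A 1 1 + A 2 2) * A 1 2 - (A 1 0 * A 0 2 + A 1 1 * A 1 2 + A 1 2 * A 2 2)) * w 2) * hN 2 2 1 + ((-((A 0 0 * A 1 1 - A 0 1 * A 1 0) + (A 0 0 * A 2 2 - A 0 2 * A 2 0)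 + (A 1 1 * A 2 2 - A 1 2 * A 2 1)) + (A 0 0 + A 1 1 + A 2 2) * A 2 2 - (A 2 0 * A 0 2 + A 2 1 * A 1 2 + A 2 2 * A 2 2)) * w 0) * hN 2 0 2 + ((-((A 0 0 * A 1 1 - A 0 1 * A 1 0) + (A 0 0 * A 2 2 - A 0 2 * A 2 0) + (A 1 1 * A 2 2 - A 1 2 * A 2 1)) + (A 0 0 + A 1 1 + A 2 2) * A 2 2 - (A 2 0 * A 0 2 + A 2 1 * A 1 2 + A 2 2 * A 2 2)) * w 1) * hN 2 1 2 + ((-((A 0 0 * A 1 1 - A 0 1 * A 1 0) + (A 0 0 * A 2 2 - A 0 2 * A 2 0) + (A 1 1 * A 2 2 - A 1 2 * A 2 1)) + (A 0 0 + A 1 1 + A 2 2) * A 2 2 - (A 2 0 * A 0 2 + A 2 1 * A 1 2 + A 2 2 * A 2 2)) * w 2) * hN 2 2 2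

lemma nij_scalar {L : E3 → (E3 →L[ℝ] E3)} {U : Set E3} (hU : IsOpen U)
    (hLsmooth : ContDiffOn ℝ (⊤ : ℕ∞) L U) (hNij : IsNijenhuisOn L U) {q : E3} (hq : q ∈ U)
    (i j k : Fin 3) :
    L q (ee j) 0 * (fderiv ℝ L q (ee 0)) (ee k) i + L q (ee j) 1 * (fderiv ℝ L q (ee 1)) (ee k) i + L q (ee j) 2 * (fderiv ℝ L q (ee 2)) (ee k) i - (L q (ee k) 0 * (fderiv ℝ L q (ee 0)) (ee j) i + L q (ee k) 1 * (fderiv ℝ L q (ee 1)) (ee j) i + L q (ee k) 2 * (fderiv ℝ L q (ee 2)) (ee j) i) + (L q (ee 0) i * (fderiv ℝ L q (ee k)) (ee j) 0 + L q (ee 1) i * (fderiv ℝ L q (ee k)) (ee j) 1 + L q (ee 2) i * (fderiv ℝ L q (ee k)) (ee j) 2) - (L q (ee 0) i * (fderiv ℝ L q (ee j)) (ee k) 0 + L q (ee 1) i * (fderiv ℝ L q (ee j)) (ee k) 1 + L q (ee 2) i * (fderiv ℝ L q (ee j)) (ee k) 2) = 0 := by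
  have hLd : DifferentiableAt ℝ L q :=
    (hLsmooth.differentiableOn (by simp)).differentiableAt (hU.mem_nhds hq)
  have hfa : ∀ u : E3, fderiv ℝ (fun q' => L q' u) q
      = (ContinuousLinearMap.apply ℝ E3 u).comp (fderiv ℝ L q) := fun u =>
    (((ContinuousLinearMap.apply ℝ E3 u).hasFDerivAt).comp q hLd.hasFDerivAt).fderiv
  have h := hNij (ee j) (ee k) q hq
  simp only [VBracket, fderiv_fun_const, Pi.zero_apply, hfa, ContinuousLinearMap.coe_comp',
    Function.comp_apply, ContinuousLinearMap.apply_apply, ContinuousLinearMap.zero_apply] at h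
  have hi := congrFun h i
  simp only [Pi.sub_apply, Pi.zero_apply, zero_sub, sub_zero, map_neg, Pi.neg_apply] at hi
  have e1 : (fderiv ℝ L q (L q (ee j))) (ee k) i
      = L q (ee j) 0 * (fderiv ℝ L q (ee 0)) (ee k) i
      + L q (ee j) 1 * (fderiv ℝ L q (ee 1)) (ee k) i
      + L q (ee j) 2 * (fderiv ℝ L q (ee 2)) (ee k) i := by
    rw [clm_expand (fderiv ℝ L q) (L q (ee j))]; simp
  have e2 : (fderiv ℝ L q (L q (ee k))) (ee j) i
      = L q (ee k) 0 * (fderiv ℝ L q (ee 0)) (ee j) i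
      + L q (ee k) 1 * (fderiv ℝ L q (ee 1)) (ee j) i
      + L q (ee k) 2 * (fderiv ℝ L q (ee 2)) (ee j) i := by
    rw [clm_expand (fderiv ℝ L q) (L q (ee k))]; simp
  have e3 := clm_apply_expand (L q) ((fderiv ℝ L q (ee k)) (ee j)) i
  have e4 := clm_apply_expand (L q) ((fderiv ℝ L q (ee j)) (ee k)) i
  rw [e1, e2, e3, e4] at hi
  linarith [hi]

lemma sigma_derivs {L : E3 → (E3 →L[ℝ] E3)} {U : Set E3} {σ1 σ2 σ3 : E3 → ℝ}
    (hU : IsOpen U) (hLsmooth : ContDiffOn ℝ (⊤ : ℕ∞) L U) (hσ : CharCoeffsOn L U σ1 σ2 σ3)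
    {q : E3} (hq : q ∈ U) (w : E3) :
    fderiv ℝ σ1 q w = (-((w 0 * (fderiv ℝ L q (ee 0)) (ee 0) 0 + w 1 * (fderiv ℝ L q (ee 1)) (ee 0) 0 + w 2 * (fderiv ℝ L q (ee 2)) (ee 0) 0) + (w 0 * (fderiv ℝ L q (ee 0)) (ee 1) 1 + w 1 * (fderiv ℝ L q (ee 1)) (ee 1) 1 + w 2 * (fderiv ℝ L q (ee 2)) (ee 1) 1) + (w 0 * (fderiv ℝ L q (ee 0)) (ee 2) 2 + w 1 * (fderiv ℝ L q (ee 1)) (ee 2) 2 + w 2 * (fderiv ℝ L q (ee 2)) (ee 2) 2))) ∧ fderiv ℝ σ2 q w = (((w 0 * (fderiv ℝ L q (ee 0)) (ee 0) 0 + w 1 * (fderiv ℝ L q (ee 1)) (ee 0) 0 + w 2 * (fderiv ℝ L q (ee 2)) (ee 0) 0) * L q (ee 1) 1 + L q (ee 0) 0 * (w 0 * (fderiv ℝ L q (ee 0)) (ee 1) 1 + w 1 * (fderiv ℝ L q (ee 1)) (ee 1) 1 + w 2 * (fderiv ℝ L q (ee 2)) (ee 1) 1)) + ((w 0 * (fderiv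 ℝ L q (ee 0)) (ee 0) 0 + w 1 * (fderiv ℝ L q (ee 1)) (ee 0) 0 + w 2 * (fderiv ℝ L q (ee 2)) (ee 0) 0) * L q (ee 2) 2 + L q (ee 0) 0 * (w 0 * (fderiv ℝ L q (ee 0)) (ee 2) 2 + w 1 * (fderiv ℝ L q (ee 1)) (ee 2) 2 + w 2 * (fderiv ℝ L q (ee 2)) (ee 2) 2)) + ((w 0 * (fderiv ℝ L q (ee 0)) (ee 1) 1 + w 1 * (fderiv ℝ L q (ee 1)) (ee 1) 1 + w 2 * (fderiv ℝ L q (ee 2)) (ee 1) 1) * L q (ee 2) 2 + L q (ee 1) 1 * (w 0 * (fderiv ℝ L q (ee 0)) (ee 2) 2 + w 1 * (fderiv ℝ L q (ee 1)) (ee 2) 2 + w 2 * (fderiv ℝ L q (ee 2)) (ee 2) 2)) + (-((w 0 * (fderiv ℝ L q (ee 0)) (ee 1) 0 + w 1 * (fderiv ℝ L q (ee 1)) (ee 1) 0 + w 2 * (fderiv ℝ L q (ee 2)) (ee 1) 0) * L q (ee 0) 1 + L q (ee 1) 0 * (w 0 * (fderiv ℝ L q (ee 0)) (ee 0) 1 +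 w 1 * (fderiv ℝ L q (ee 1)) (ee 0) 1 + w 2 * (fderiv ℝ L q (ee 2)) (ee 0) 1))) + (-((w 0 * (fderiv ℝ L q (ee 0)) (ee 2) 0 + w 1 * (fderiv ℝ L q (ee 1)) (ee 2) 0 + w 2 * (fderiv ℝ L q (ee 2)) (ee 2) 0) * L q (ee 0) 2 + L q (ee 2) 0 * (w 0 * (fderiv ℝ L q (ee 0)) (ee 0) 2 + w 1 * (fderiv ℝ L q (ee 1)) (ee 0) 2 + w 2 * (fderiv ℝ L q (ee 2)) (ee 0) 2))) + (-((w 0 * (fderiv ℝ L q (ee 0)) (ee 2) 1 + w 1 * (fderiv ℝ L q (ee 1)) (ee 2) 1 + w 2 * (fderiv ℝ L q (ee 2)) (ee 2) 1) * L q (ee 1) 2 + L q (ee 2) 1 * (w 0 * (fderiv ℝ L q (ee 0)) (ee 1) 2 + w 1 * (fderiv ℝ L q (ee 1)) (ee 1) 2 + w 2 * (fderiv ℝ L q (ee 2)) (ee 1) 2)))) ∧ fderiv ℝ σ3 q w = (-(0 + ((w 0 * (fderiv ℝ L q (ee 0)) (ee 0) 0 + w 1 * (fderiv ℝ L q (ee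 1)) (ee 0) 0 + w 2 * (fderiv ℝ L q (ee 2)) (ee 0) 0) * L q (ee 1) 1 * L q (ee 2) 2) + (L q (ee 0) 0 * (w 0 * (fderiv ℝ L q (ee 0)) (ee 1) 1 + w 1 * (fderiv ℝ L q (ee 1)) (ee 1) 1 + w 2 * (fderiv ℝ L q (ee 2)) (ee 1) 1) * L q (ee 2) 2) + (L q (ee 0) 0 * L q (ee 1) 1 * (w 0 * (fderiv ℝ L q (ee 0)) (ee 2) 2 + w 1 * (fderiv ℝ L q (ee 1)) (ee 2) 2 + w 2 * (fderiv ℝ L q (ee 2)) (ee 2) 2)) - ((w 0 * (fderiv ℝ L q (ee 0)) (ee 0) 0 + w 1 * (fderiv ℝ L q (ee 1)) (ee 0) 0 + w 2 * (fderiv ℝ L q (ee 2)) (ee 0) 0) * L q (ee 2) 1 * L q (ee 1) 2) - (L q (ee 0) 0 * (w 0 * (fderiv ℝ L q (ee 0)) (ee 2) 1 + w 1 * (fderiv ℝ L q (ee 1)) (ee 2) 1 + w 2 * (fderiv ℝ L q (ee 2)) (ee 2) 1) * L q (ee 1) 2) - (L q (ee 0) 0 * L q (ee 2) 1 * (w 0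 * (fderiv ℝ L q (ee 0)) (ee 1) 2 + w 1 * (fderiv ℝ L q (ee 1)) (ee 1) 2 + w 2 * (fderiv ℝ L q (ee 2)) (ee 1) 2)) - ((w 0 * (fderiv ℝ L q (ee 0)) (ee 1) 0 + w 1 * (fderiv ℝ L q (ee 1)) (ee 1) 0 + w 2 * (fderiv ℝ L q (ee 2)) (ee 1) 0) * L q (ee 0) 1 * L q (ee 2) 2) - (L q (ee 1) 0 * (w 0 * (fderiv ℝ L q (ee 0)) (ee 0) 1 + w 1 * (fderiv ℝ L q (ee 1)) (ee 0) 1 + w 2 * (fderiv ℝ L q (ee 2)) (ee 0) 1) * L q (ee 2) 2) - (L q (ee 1) 0 * L q (ee 0) 1 * (w 0 * (fderiv ℝ L q (ee 0)) (ee 2) 2 + w 1 * (fderiv ℝ L q (ee 1)) (ee 2) 2 + w 2 * (fderiv ℝ L q (ee 2)) (ee 2) 2)) + ((w 0 * (fderiv ℝ L q (ee 0)) (ee 1) 0 + w 1 * (fderiv ℝ L q (ee 1)) (ee 1) 0 + w 2 * (fderiv ℝ L q (ee 2)) (ee 1) 0) * L q (ee 2) 1 * L q (ee 0) 2) + (L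 q (ee 1) 0 * (w 0 * (fderiv ℝ L q (ee 0)) (ee 2) 1 + w 1 * (fderiv ℝ L q (ee 1)) (ee 2) 1 + w 2 * (fderiv ℝ L q (ee 2)) (ee 2) 1) * L q (ee 0) 2) + (L q (ee 1) 0 * L q (ee 2) 1 * (w 0 * (fderiv ℝ L q (ee 0)) (ee 0) 2 + w 1 * (fderiv ℝ L q (ee 1)) (ee 0) 2 + w 2 * (fderiv ℝ L q (ee 2)) (ee 0) 2)) + ((w 0 * (fderiv ℝ L q (ee 0)) (ee 2) 0 + w 1 * (fderiv ℝ L q (ee 1)) (ee 2) 0 + w 2 * (fderiv ℝ L q (ee 2)) (ee 2) 0) * L q (ee 0) 1 * L q (ee 1) 2) + (L q (ee 2) 0 * (w 0 * (fderiv ℝ L q (ee 0)) (ee 0) 1 + w 1 * (fderiv ℝ L q (ee 1)) (ee 0) 1 + w 2 * (fderiv ℝ L q (ee 2)) (ee 0) 1) * L q (ee 1) 2) + (L q (ee 2) 0 * L q (ee 0) 1 * (w 0 * (fderiv ℝ L q (ee 0)) (ee 1) 2 + w 1 * (fderiv ℝ L q (ee 1)) (ee 1) 2 + w 2 * (fderiv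 ℝ L q (ee 2)) (ee 1) 2)) - ((w 0 * (fderiv ℝ L q (ee 0)) (ee 2) 0 + w 1 * (fderiv ℝ L q (ee 1)) (ee 2) 0 + w 2 * (fderiv ℝ L q (ee 2)) (ee 2) 0) * L q (ee 1) 1 * L q (ee 0) 2) - (L q (ee 2) 0 * (w 0 * (fderiv ℝ L q (ee 0)) (ee 1) 1 + w 1 * (fderiv ℝ L q (ee 1)) (ee 1) 1 + w 2 * (fderiv ℝ L q (ee 2)) (ee 1) 1) * L q (ee 0) 2) - (L q (ee 2) 0 * L q (ee 1) 1 * (w 0 * (fderiv ℝ L q (ee 0)) (ee 0) 2 + w 1 * (fderiv ℝ L q (ee 1)) (ee 0) 2 + w 2 * (fderiv ℝ L q (ee 2)) (ee 0) 2)))) := by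
  have hLd : DifferentiableAt ℝ L q :=
    (hLsmooth.differentiableOn (by simp)).differentiableAt (hU.mem_nhds hq)
  have hL' := hLd.hasFDerivAt
  have hC : ∀ i j : Fin 3, HasFDerivAt (fun q' => L q' (ee j) i)
      ((((ContinuousLinearMap.proj i).comp (ContinuousLinearMap.apply ℝ E3 (ee j))).comp
        (fderiv ℝ L q))) q := fun i j =>
    ((((ContinuousLinearMap.proj i).comp
      (ContinuousLinearMap.apply ℝ E3 (ee j))).hasFDerivAt).comp q hL')
  have hdir : ∀ (v : E3) (j i : Fin 3), (fderiv ℝ L q v) (ee j) i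
      = v 0 * (fderiv ℝ L q (ee 0)) (ee j) i + v 1 * (fderiv ℝ L q (ee 1)) (ee j) i
        + v 2 * (fderiv ℝ L q (ee 2)) (ee j) i := by
    intro v j i; rw [clm_expand (fderiv ℝ L q) v]; simp
  have hP1 := (HasFDerivAt.neg (((hC 0 0).add (hC 1 1)).add (hC 2 2)))
  have heq1 : σ1 =ᶠ[nhds q] (fun q' => -(L q' (ee 0) 0 + L q' (ee 1) 1 + L q' (ee 2) 2)) :=
    Filter.eventuallyEq_of_mem (hU.mem_nhds hq) (fun q' hq' => (sigma_vals hσ hq').1)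
  have e1 : fderiv ℝ σ1 q = _ := (heq1.fderiv_eq).trans hP1.fderiv
  have hP2 := ((((hC 0 0).mul (hC 1 1)).sub ((hC 0 1).mul (hC 1 0))).add ((((hC 0 0).mul (hC 2 2)).sub ((hC 0 2).mul (hC 2 0))))).add ((((hC 1 1).mul (hC 2 2)).sub ((hC 1 2).mul (hC 2 1))))
  have heq2 : σ2 =ᶠ[nhds q] (fun q' => (L q' (ee 0) 0 * L q' (ee 1) 1 - L q' (ee 1) 0 * L q' (ee 0) 1) + (L q' (ee 0) 0 * L q' (ee 2) 2 - L q' (ee 2) 0 * L q' (ee 0) 2) + (L q' (ee 1) 1 * L q' (ee 2) 2 - L q' (ee 2) 1 * L q' (ee 1) 2)) :=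
    Filter.eventuallyEq_of_mem (hU.mem_nhds hq) (fun q' hq' => (sigma_vals hσ hq').2.1)
  have e2 : fderiv ℝ σ2 q = _ := (heq2.fderiv_eq).trans hP2.fderiv
  have hP3 := HasFDerivAt.neg ((((hC 0 0).mul (((hC 1 1).mul (hC 2 2)).sub ((hC 1 2).mul (hC 2 1)))).sub (((hC 0 1).mul (((hC 1 0).mul (hC 2 2)).sub ((hC 1 2).mul (hC 2 0)))))).add (((hC 0 2).mul (((hC 1 0).mul (hC 2 1)).sub ((hC 1 1).mul (hC 2 0))))))
  have heq3 : σ3 =ᶠ[nhds q] (fun q' => -(L q' (ee 0) 0 * (L q' (ee 1) 1 * L q' (ee 2) 2 - L q' (ee 2) 1 * L q' (ee 1) 2) - L q' (ee 1) 0 * (L q' (ee 0) 1 * L q' (ee 2) 2 - L q' (ee 2) 1 * L q' (ee 0) 2) + L q' (ee 2) 0 * (L q' (ee 0) 1 * L q' (ee 1) 2 - L q' (ee 1) 1 * L q' (ee 0) 2))) :=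
    Filter.eventuallyEq_of_mem (hU.mem_nhds hq) (fun q' hq' => (sigma_vals hσ hq').2.2)
  have e3 : fderiv ℝ σ3 q = _ := (heq3.fderiv_eq).trans hP3.fderiv
  refine ⟨?_, ?_, ?_⟩
  · rw [e1]
    simp only [ContinuousLinearMap.neg_apply, ContinuousLinearMap.add_apply,
      ContinuousLinearMap.sub_apply, ContinuousLinearMap.smul_apply,
      ContinuousLinearMap.comp_apply, ContinuousLinearMap.proj_apply,
      ContinuousLinearMap.apply_apply, smul_eq_mul]
    simp only [hdir w]
    try ring
  · rw [e2]
    simp only [ContinuousLinearMap.neg_apply, ContinuousLinearMap.add_apply,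
      ContinuousLinearMap.sub_apply, ContinuousLinearMap.smul_apply,
      ContinuousLinearMap.comp_apply, ContinuousLinearMap.proj_apply,
      ContinuousLinearMap.apply_apply, smul_eq_mul]
    simp only [hdir w]
    try ring
  · rw [e3]
    simp only [ContinuousLinearMap.neg_apply, ContinuousLinearMap.add_apply,
      ContinuousLinearMap.sub_apply, ContinuousLinearMap.smul_apply,
      ContinuousLinearMap.comp_apply, ContinuousLinearMap.proj_apply,
      ContinuousLinearMap.apply_apply, smul_eq_mul]
    simp only [hdir w, Pi.mul_apply, Pi.sub_apply]
    try ring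

lemma keyR {L : E3 → (E3 →L[ℝ] E3)} {U : Set E3} {σ1 σ2 σ3 : E3 → ℝ}
    (hU : IsOpen U) (hLsmooth : ContDiffOn ℝ (⊤ : ℕ∞) L U) (hNij : IsNijenhuisOn L U)
    (hσ : CharCoeffsOn L U σ1 σ2 σ3) {q : E3} (hq : q ∈ U) (w : E3) :
    fderiv ℝ σ1 q (L q w) = fderiv ℝ σ2 q w - σ1 q * fderiv ℝ σ1 q w
  ∧ fderiv ℝ σ2 q (L q w) = fderiv ℝ σ3 q w - σ2 q * fderiv ℝ σ1 q w
  ∧ fderiv ℝ σ3 q (L q w) = - (σ3 q * fderiv ℝ σ1 q w) := by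
  obtain ⟨s1v, s2v, s3v⟩ := sigma_vals hσ hq
  obtain ⟨dL1, dL2, dL3⟩ := sigma_derivs hU hLsmooth hσ hq (L q w)
  obtain ⟨dw1, dw2, dw3⟩ := sigma_derivs hU hLsmooth hσ hq w
  have hcomp : ∀ c : Fin 3, L q w c
      = w 0 * L q (ee 0) c + w 1 * L q (ee 1) c + w 2 * L q (ee 2) c :=
    fun c => clm_apply_expand (L q) w c
  obtain ⟨C1, C2, C3⟩ := cert_R (fun i j => L q (ee j) i)
    (fun i j c => (fderiv ℝ L q (ee c)) (ee j) i) w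
    (fun i j k => nij_scalar hU hLsmooth hNij hq i j k)
  try simp only [] at C1 C2 C3
  refine ⟨?_, ?_, ?_⟩
  · rw [dL1, dw2, dw1, s1v, hcomp 0, hcomp 1, hcomp 2]; linear_combination C1
  · rw [dL2, dw3, dw1, s2v, hcomp 0, hcomp 1, hcomp 2]; linear_combination C2
  · rw [dL3, dw1, s3v, hcomp 0, hcomp 1, hcomp 2]; linear_combination C3

def Pone (L : E3 → (E3 →L[ℝ] E3)) : E3 → ℝ := fun q => -(L q (ee 0) 0 + L q (ee 1) 1 + L q (ee 2) 2)
def Ptwo (L : E3 → (E3 →L[ℝ] E3)) : E3 → ℝ := fun q => (L q (ee 0) 0 * L q (ee 1) 1 - L q (ee 1) 0 * L q (ee 0) 1) + (L q (ee 0) 0 * L q (ee 2) 2 - L q (ee 2) 0 * L q (ee 0) 2) + (L q (ee 1) 1 * L q (ee 2) 2 - L q (ee 2) 1 * L q (ee 1) 2)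
def Pthree (L : E3 → (E3 →L[ℝ] E3)) : E3 → ℝ := fun q => -(L q (ee 0) 0 * (L q (ee 1) 1 * L q (ee 2) 2 - L q (ee 2) 1 * L q (ee 1) 2) - L q (ee 1) 0 * (L q (ee 0) 1 * L q (ee 2) 2 - L q (ee 2) 1 * L q (ee 0) 2) + L q (ee 2) 0 * (L q (ee 0) 1 * L q (ee 1) 2 - L q (ee 1) 1 * L q (ee 0) 2))

lemma sigma_eq_P {L : E3 → (E3 →L[ℝ] E3)} {U : Set E3} {σ1 σ2 σ3 : E3 → ℝ}
    (hσ : CharCoeffsOn L U σ1 σ2 σ3) {q : E3} (hq : q ∈ U) :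
    σ1 q = Pone L q ∧ σ2 q = Ptwo L q ∧ σ3 q = Pthree L q := sigma_vals hσ hq

lemma hent_cd {L : E3 → (E3 →L[ℝ] E3)} {U : Set E3} (hLsmooth : ContDiffOn ℝ (⊤ : ℕ∞) L U)
    (i j : Fin 3) : ContDiffOn ℝ (⊤ : ℕ∞) (fun q => L q (ee j) i) U :=
  (((ContinuousLinearMap.proj i).comp
    (ContinuousLinearMap.apply ℝ E3 (ee j))).contDiff).comp_contDiffOn hLsmooth

lemma contDiffOn_Pone {L : E3 → (E3 →L[ℝ] E3)} {U : Set E3}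
    (hLsmooth : ContDiffOn ℝ (⊤ : ℕ∞) L U) : ContDiffOn ℝ (⊤ : ℕ∞) (Pone L) U := by
  have hC := hent_cd hLsmooth
  exact (((hC 0 0).add (hC 1 1)).add (hC 2 2)).neg

lemma contDiffOn_Ptwo {L : E3 → (E3 →L[ℝ] E3)} {U : Set E3}
    (hLsmooth : ContDiffOn ℝ (⊤ : ℕ∞) L U) : ContDiffOn ℝ (⊤ : ℕ∞) (Ptwo L) U := by
  have hC := hent_cd hLsmooth
  exact ((((hC 0 0).mul (hC 1 1)).sub ((hC 0 1).mul (hC 1 0))).add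
    ((((hC 0 0).mul (hC 2 2)).sub ((hC 0 2).mul (hC 2 0))))).add
    ((((hC 1 1).mul (hC 2 2)).sub ((hC 1 2).mul (hC 2 1))))

lemma contDiffOn_Pthree {L : E3 → (E3 →L[ℝ] E3)} {U : Set E3}
    (hLsmooth : ContDiffOn ℝ (⊤ : ℕ∞) L U) : ContDiffOn ℝ (⊤ : ℕ∞) (Pthree L) U := by
  have hC := hent_cd hLsmooth
  exact ((((hC 0 0).mul (((hC 1 1).mul (hC 2 2)).sub ((hC 1 2).mul (hC 2 1)))).sub
    ((hC 0 1).mul (((hC 1 0).mul (hC 2 2)).sub ((hC 1 2).mul (hC 2 0))))).add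
    ((hC 0 2).mul (((hC 1 0).mul (hC 2 1)).sub ((hC 1 1).mul (hC 2 0))))).neg

/-- **Theorem (rank-1 case).** If `L` is a smooth three-dimensional Nijenhuis operator,
`dσ₁(p) ≠ 0`, and `dσ₂, dσ₃` are scalar multiples of `dσ₁` on a neighborhood of `p`,
then (with `x = −σ₁`) one of the three listed normal forms of the characteristic
polynomial holds identically on some neighborhood of `p`. -/
theorem rank_one_trichotomy
    (U : Set E3) (hU : IsOpen U) (p : E3) (hp : p ∈ U)
    (L : E3 → (E3 →L[ℝ] E3)) (hLsmooth : ContDiffOn ℝ (⊤ : ℕ∞) L U)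
    (hNij : IsNijenhuisOn L U)
    (σ1 σ2 σ3 : E3 → ℝ) (hσ : CharCoeffsOn L U σ1 σ2 σ3)
    (hd1 : fderiv ℝ σ1 p ≠ 0)
    (W : Set E3) (hW : IsOpen W) (hpW : p ∈ W) (hWU : W ⊆ U)
    (hprop : ∀ q ∈ W, ∃ a b : ℝ,
      fderiv ℝ σ2 q = a • fderiv ℝ σ1 q ∧ fderiv ℝ σ3 q = b • fderiv ℝ σ1 q) :
    ∃ V : Set E3, IsOpen V ∧ p ∈ V ∧ V ⊆ U ∧
      ((∃ α γ : ℝ, ∀ q ∈ V,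
          σ2 q = α * (-σ1 q) - γ - α ^ 2 ∧ σ3 q = γ * (-σ1 q - α)) ∨
       (∀ q ∈ V,
          σ2 q = (-σ1 q) ^ 2 / 3 ∧ σ3 q = -(-σ1 q) ^ 3 / 27) ∨
       (∃ c : ℝ, ∀ q ∈ V,
          σ2 q = (-σ1 q) ^ 2 / 4 - c * (-σ1 q) / 3 - c ^ 2 / 3 ∧
          σ3 q = c / 6 * (-σ1 q + 2 * c / 3) ^ 2)) := by
  classical
  have hQ1 := contDiffOn_Pone hLsmooth
  have hQ2 := contDiffOn_Ptwo hLsmooth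
  have hQ3 := contDiffOn_Pthree hLsmooth
  have hs1 : ∀ q ∈ U, σ1 q = Pone L q := fun q hq => (sigma_eq_P hσ hq).1
  have hs2 : ∀ q ∈ U, σ2 q = Ptwo L q := fun q hq => (sigma_eq_P hσ hq).2.1
  have hs3 : ∀ q ∈ U, σ3 q = Pthree L q := fun q hq => (sigma_eq_P hσ hq).2.2
  have hfe1 : ∀ q ∈ U, fderiv ℝ σ1 q = fderiv ℝ (Pone L) q := fun q hq =>
    Filter.EventuallyEq.fderiv_eq
      (Filter.eventuallyEq_of_mem (hU.mem_nhds hq) (fun z hz => hs1 z hz))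
  have hfe2 : ∀ q ∈ U, fderiv ℝ σ2 q = fderiv ℝ (Ptwo L) q := fun q hq =>
    Filter.EventuallyEq.fderiv_eq
      (Filter.eventuallyEq_of_mem (hU.mem_nhds hq) (fun z hz => hs2 z hz))
  have hfe3 : ∀ q ∈ U, fderiv ℝ σ3 q = fderiv ℝ (Pthree L) q := fun q hq =>
    Filter.EventuallyEq.fderiv_eq
      (Filter.eventuallyEq_of_mem (hU.mem_nhds hq) (fun z hz => hs3 z hz))
  have hP1d : ∀ q ∈ U, DifferentiableAt ℝ (Pone L) q := fun q hq =>
    (hQ1.differentiableOn (by simp)).differentiableAt (hU.mem_nhds hq)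
  have hP2d : ∀ q ∈ U, DifferentiableAt ℝ (Ptwo L) q := fun q hq =>
    (hQ2.differentiableOn (by simp)).differentiableAt (hU.mem_nhds hq)
  have hP3d : ∀ q ∈ U, DifferentiableAt ℝ (Pthree L) q := fun q hq =>
    (hQ3.differentiableOn (by simp)).differentiableAt (hU.mem_nhds hq)
  obtain ⟨w0, hw0⟩ : ∃ w0 : E3, fderiv ℝ σ1 p w0 ≠ 0 := by
    by_contra h
    push_neg at h
    exact hd1 (ContinuousLinearMap.ext fun w => by simp [h w])
  set G1 : E3 → ℝ := fun q => fderiv ℝ (Pone L) q w0 with hG1def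
  set G2 : E3 → ℝ := fun q => fderiv ℝ (Ptwo L) q w0 with hG2def
  set G3 : E3 → ℝ := fun q => fderiv ℝ (Pthree L) q w0 with hG3def
  have hG1s : ContDiffOn ℝ (⊤ : ℕ∞) G1 U := (hQ1.fderiv_of_isOpen hU (by simp)).clm_apply contDiffOn_const
  have hG2s : ContDiffOn ℝ (⊤ : ℕ∞) G2 U := (hQ2.fderiv_of_isOpen hU (by simp)).clm_apply contDiffOn_const
  have hG3s : ContDiffOn ℝ (⊤ : ℕ∞) G3 U := (hQ3.fderiv_of_isOpen hU (by simp)).clm_apply contDiffOn_const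
  have hG1p : G1 p ≠ 0 := by
    have h : fderiv ℝ σ1 p w0 = G1 p := by rw [hfe1 p hp]
    rwa [h] at hw0
  have hOopen : IsOpen ((U ∩ G1 ⁻¹' ({0}ᶜ)) ∩ W) :=
    ((hG1s.continuousOn).isOpen_inter_preimage hU isOpen_compl_singleton).inter hW
  have hpO : p ∈ (U ∩ G1 ⁻¹' ({0}ᶜ)) ∩ W := ⟨⟨hp, by simpa using hG1p⟩, hpW⟩
  obtain ⟨r, hr0, hball⟩ := Metric.isOpen_iff.1 hOopen p hpO
  set V : Set E3 := Metric.ball p r with hVdef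
  have hVopen : IsOpen V := Metric.isOpen_ball
  have hpV : p ∈ V := Metric.mem_ball_self hr0
  have hVU : V ⊆ U := fun q hq => (hball hq).1.1
  have hVW : V ⊆ W := fun q hq => (hball hq).2
  have hVG1 : ∀ q ∈ V, G1 q ≠ 0 := fun q hq => by simpa using (hball hq).1.2
  have hVconv : Convex ℝ V := convex_ball p r
  set aF : E3 → ℝ := fun q => G2 q / G1 q with haFdef
  set bF : E3 → ℝ := fun q => G3 q / G1 q with hbFdef
  have haFs : ContDiffOn ℝ (⊤ : ℕ∞) aF V := ((hG2s.mono hVU).div (hG1s.mono hVU) hVG1)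
  have hbFs : ContDiffOn ℝ (⊤ : ℕ∞) bF V := ((hG3s.mono hVU).div (hG1s.mono hVU) hVG1)
  have haFd : ∀ q ∈ V, DifferentiableAt ℝ aF q := fun q hq =>
    (haFs.differentiableOn (by simp)).differentiableAt (hVopen.mem_nhds hq)
  have hbFd : ∀ q ∈ V, DifferentiableAt ℝ bF q := fun q hq =>
    (hbFs.differentiableOn (by simp)).differentiableAt (hVopen.mem_nhds hq)
  have hG2a : ∀ q ∈ V, G2 q = aF q * G1 q := fun q hq =>
    (div_mul_cancel₀ (G2 q) (hVG1 q hq)).symm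
  have hG3b : ∀ q ∈ V, G3 q = bF q * G1 q := fun q hq =>
    (div_mul_cancel₀ (G3 q) (hVG1 q hq)).symm
  have hprop2 : ∀ q ∈ V, fderiv ℝ (Ptwo L) q = aF q • fderiv ℝ (Pone L) q
      ∧ fderiv ℝ (Pthree L) q = bF q • fderiv ℝ (Pone L) q := by
    intro q hq
    obtain ⟨s, t, hsd, htd⟩ := hprop q (hVW hq)
    have hsw : G2 q = s * G1 q := by
      have h := congrArg (fun (T : E3 →L[ℝ] ℝ) => T w0) hsd
      simpa [hfe2 q (hVU hq), hfe1 q (hVU hq)] using h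
    have htw : G3 q = t * G1 q := by
      have h := congrArg (fun (T : E3 →L[ℝ] ℝ) => T w0) htd
      simpa [hfe3 q (hVU hq), hfe1 q (hVU hq)] using h
    have hsa : s = aF q := by
      have : aF q = G2 q / G1 q := rfl
      rw [this, hsw, mul_div_assoc, div_self (hVG1 q hq), mul_one]
    have htb : t = bF q := by
      have : bF q = G3 q / G1 q := rfl
      rw [this, htw, mul_div_assoc, div_self (hVG1 q hq), mul_one]
    constructor
    · rw [← hfe2 q (hVU hq), ← hfe1 q (hVU hq), hsd, hsa]
    · rw [← hfe3 q (hVU hq), ← hfe1 q (hVU hq), htd, htb]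
  set lamF : E3 → ℝ := fun q => aF q - Pone L q with hlamFdef
  have hlamFd : ∀ q ∈ V, DifferentiableAt ℝ lamF q := fun q hq =>
    (haFd q hq).sub (hP1d q (hVU hq))
  have hk2 : ∀ q ∈ V, aF q * lamF q = bF q - Ptwo L q := by
    intro q hq
    obtain ⟨hR1, hR2, _⟩ := keyR hU hLsmooth hNij hσ (hVU hq) w0
    have e1 : fderiv ℝ σ1 q w0 = G1 q := by rw [hfe1 q (hVU hq)]
    have e2 : fderiv ℝ σ2 q w0 = G2 q := by rw [hfe2 q (hVU hq)]
    have e3 : fderiv ℝ σ3 q w0 = G3 q := by rw [hfe3 q (hVU hq)]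
    have hlam : lamF q = aF q - Pone L q := rfl
    have hL1 : fderiv ℝ σ1 q (L q w0) = lamF q * G1 q := by
      rw [hR1, e1, e2, hs1 q (hVU hq), hG2a q hq, hlam]; ring
    have hL2 : fderiv ℝ σ2 q (L q w0) = aF q * (lamF q * G1 q) := by
      rw [hfe2 q (hVU hq), (hprop2 q hq).1, ContinuousLinearMap.smul_apply, smul_eq_mul,
        ← hfe1 q (hVU hq), hL1]
    rw [hL2, e1, e3, hs2 q (hVU hq), hG3b q hq] at hR2
    exact mul_right_cancel₀ (hVG1 q hq) (by linear_combination hR2 :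
      (aF q * lamF q) * G1 q = (bF q - Ptwo L q) * G1 q)
  have hk3 : ∀ q ∈ V, bF q * lamF q = -(Pthree L q) := by
    intro q hq
    obtain ⟨hR1, _, hR3⟩ := keyR hU hLsmooth hNij hσ (hVU hq) w0
    have e1 : fderiv ℝ σ1 q w0 = G1 q := by rw [hfe1 q (hVU hq)]
    have e2 : fderiv ℝ σ2 q w0 = G2 q := by rw [hfe2 q (hVU hq)]
    have hlam : lamF q = aF q - Pone L q := rfl
    have hL1 : fderiv ℝ σ1 q (L q w0) = lamF q * G1 q := by
      rw [hR1, e1, e2, hs1 q (hVU hq), hG2a q hq, hlam]; ring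
    have hL3 : fderiv ℝ σ3 q (L q w0) = bF q * (lamF q * G1 q) := by
      rw [hfe3 q (hVU hq), (hprop2 q hq).2, ContinuousLinearMap.smul_apply, smul_eq_mul,
        ← hfe1 q (hVU hq), hL1]
    rw [hL3, e1, hs3 q (hVU hq)] at hR3
    exact mul_right_cancel₀ (hVG1 q hq) (by linear_combination hR3 :
      (bF q * lamF q) * G1 q = (-(Pthree L q)) * G1 q)
  set a2 : E3 → ℝ := fun q => fderiv ℝ aF q w0 / G1 q with ha2def
  have hdaw : ∀ q ∈ V, fderiv ℝ aF q w0 = a2 q * G1 q := fun q hq =>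
    (div_mul_cancel₀ (fderiv ℝ aF q w0) (hVG1 q hq)).symm
  have ha2full : ∀ q ∈ V, ∀ u : E3, fderiv ℝ aF q u = a2 q * fderiv ℝ (Pone L) q u := by
    intro q hqV u
    have hqU := hVU hqV
    have hPsi2d : DifferentiableAt ℝ (fderiv ℝ (Ptwo L)) q :=
      (((hQ2.fderiv_of_isOpen hU (by exact_mod_cast le_top)).differentiableOn (by simp : ((⊤ : ℕ∞) : WithTop ℕ∞) ≠ 0)).differentiableAt
        (hU.mem_nhds hqU))
    have hPsi1d : DifferentiableAt ℝ (fderiv ℝ (Pone L)) q :=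
      (((hQ1.fderiv_of_isOpen hU (by exact_mod_cast le_top)).differentiableOn (by simp : ((⊤ : ℕ∞) : WithTop ℕ∞) ≠ 0)).differentiableAt
        (hU.mem_nhds hqU))
    have hev2 : ∀ᶠ y in nhds q, HasFDerivAt σ2 (fderiv ℝ (Ptwo L) y) y := by
      filter_upwards [hU.mem_nhds hqU] with y hy
      exact ((hP2d y hy).hasFDerivAt).congr_of_eventuallyEq
        (Filter.eventuallyEq_of_mem (hU.mem_nhds hy) (fun z hz => hs2 z hz))
    have hev1 : ∀ᶠ y in nhds q, HasFDerivAt σ1 (fderiv ℝ (Pone L) y) y := by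
      filter_upwards [hU.mem_nhds hqU] with y hy
      exact ((hP1d y hy).hasFDerivAt).congr_of_eventuallyEq
        (Filter.eventuallyEq_of_mem (hU.mem_nhds hy) (fun z hz => hs1 z hz))
    have hsym2 := second_derivative_symmetric_of_eventually hev2 hPsi2d.hasFDerivAt
    have hsym1 := second_derivative_symmetric_of_eventually hev1 hPsi1d.hasFDerivAt
    have hfd : fderiv ℝ (fderiv ℝ (Ptwo L)) q
        = aF q • fderiv ℝ (fderiv ℝ (Pone L)) q
          + (fderiv ℝ aF q).smulRight (fderiv ℝ (Pone L) q) := by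
      have h1 : fderiv ℝ (fderiv ℝ (Ptwo L)) q
          = fderiv ℝ (fun q' => aF q' • fderiv ℝ (Pone L) q') q :=
        Filter.EventuallyEq.fderiv_eq (Filter.eventuallyEq_of_mem (hVopen.mem_nhds hqV)
          (fun z hz => (hprop2 z hz).1))
      rw [h1]; exact fderiv_smul (haFd q hqV) hPsi1d
    have h2 := hsym2 u w0
    rw [hfd] at h2
    simp only [ContinuousLinearMap.add_apply, ContinuousLinearMap.smul_apply,
      ContinuousLinearMap.smulRight_apply, smul_eq_mul] at h2
    rw [hsym1 u w0] at h2
    have h3 : fderiv ℝ aF q u * G1 q = (a2 q * G1 q) * fderiv ℝ (Pone L) q u := by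
      have e0 : fderiv ℝ (Pone L) q w0 = G1 q := rfl
      rw [← hdaw q hqV]
      rw [e0] at h2
      linarith
    exact mul_right_cancel₀ (hVG1 q hqV) (by linear_combination h3 :
      (fderiv ℝ aF q u) * G1 q = (a2 q * fderiv ℝ (Pone L) q u) * G1 q)
  have hdlamw : ∀ q ∈ V, fderiv ℝ lamF q w0 = a2 q * G1 q - G1 q := by
    intro q hq
    have h := ((haFd q hq).hasFDerivAt.sub (hP1d q (hVU hq)).hasFDerivAt).fderiv
    have hgoal : fderiv ℝ lamF q w0
        = fderiv ℝ aF q w0 - fderiv ℝ (Pone L) q w0 := by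
      rw [show (fderiv ℝ lamF q : E3 →L[ℝ] ℝ)
          = fderiv ℝ aF q - fderiv ℝ (Pone L) q from h]
      simp
    rw [hgoal, hdaw q hq]
  set hFf : E3 → ℝ := fun q => lamF q * lamF q + 2 * (aF q * lamF q) + Ptwo L q with hFfdef
  set psiF : E3 → ℝ := fun q => 2 * lamF q + aF q with hpsiFdef
  have key0 : ∀ q ∈ V, a2 q * hFf q = 0 := by
    intro q hq
    have hZ3 : fderiv ℝ (fun q' => bF q' * lamF q' + Pthree L q') q = 0 := by
      have hev : (fun q' => bF q' * lamF q' + Pthree L q') =ᶠ[nhds q] (fun _ => (0:ℝ)) :=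
        Filter.eventuallyEq_of_mem (hVopen.mem_nhds hq)
          (fun z hz => by have := hk3 z hz; show bF z * lamF z + Pthree L z = 0; linarith)
      rw [hev.fderiv_eq]
      exact fderiv_const_apply 0
    have hD3 := (((hbFd q hq).hasFDerivAt.mul (hlamFd q hq).hasFDerivAt).add
      (hP3d q (hVU hq)).hasFDerivAt).fderiv
    have hi1 : bF q * (a2 q * G1 q - G1 q) + lamF q * fderiv ℝ bF q w0 + bF q * G1 q = 0 := by
      have h := congrArg (fun (T : E3 →L[ℝ] ℝ) => T w0) (hD3.symm.trans hZ3)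
      have e3 : fderiv ℝ (Pthree L) q w0 = G3 q := rfl
      simp only [ContinuousLinearMap.add_apply, ContinuousLinearMap.smul_apply,
        ContinuousLinearMap.zero_apply, smul_eq_mul] at h
      rw [hdlamw q hq, e3, hG3b q hq] at h
      linarith
    have hZ2 : fderiv ℝ (fun q' => aF q' * lamF q' - bF q' + Ptwo L q') q = 0 := by
      have hev : (fun q' => aF q' * lamF q' - bF q' + Ptwo L q') =ᶠ[nhds q] (fun _ => (0:ℝ)) :=
        Filter.eventuallyEq_of_mem (hVopen.mem_nhds hq)
          (fun z hz => by have := hk2 z hz; show aF z * lamF z - bF z + Ptwo L z = 0; linarith)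
      rw [hev.fderiv_eq]
      exact fderiv_const_apply 0
    have hD2 := ((((haFd q hq).hasFDerivAt.mul (hlamFd q hq).hasFDerivAt).sub
      (hbFd q hq).hasFDerivAt).add (hP2d q (hVU hq)).hasFDerivAt).fderiv
    have hi2 : aF q * (a2 q * G1 q - G1 q) + lamF q * (a2 q * G1 q)
        - fderiv ℝ bF q w0 + aF q * G1 q = 0 := by
      have h := congrArg (fun (T : E3 →L[ℝ] ℝ) => T w0) (hD2.symm.trans hZ2)
      have e2 : fderiv ℝ (Ptwo L) q w0 = G2 q := rfl
      simp only [ContinuousLinearMap.add_apply, ContinuousLinearMap.sub_apply,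
        ContinuousLinearMap.smul_apply, ContinuousLinearMap.zero_apply, smul_eq_mul] at h
      rw [hdlamw q hq, hdaw q hq, e2, hG2a q hq] at h
      linarith
    have hfac : (a2 q * hFf q) * G1 q = 0 := by
      have hh : hFf q = lamF q * lamF q + 2 * (aF q * lamF q) + Ptwo L q := rfl
      rw [hh]
      linear_combination hi1 + lamF q * hi2 + (a2 q * G1 q) * (hk2 q hq)
    rcases mul_eq_zero.1 hfac with h | h
    · exact h
    · exact absurd h (hVG1 q hq)
  -- derivative formulas for hFf and psiF
  have hdh : ∀ q ∈ V, fderiv ℝ hFf q w0 = (2 * a2 q - 1) * psiF q * G1 q := by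
    intro q hq
    have hD := ((((hlamFd q hq).hasFDerivAt.mul (hlamFd q hq).hasFDerivAt).add
      (((haFd q hq).hasFDerivAt.mul (hlamFd q hq).hasFDerivAt).const_mul 2)).add
      (hP2d q (hVU hq)).hasFDerivAt).fderiv
    have h := congrArg (fun (T : E3 →L[ℝ] ℝ) => T w0) hD
    have e2 : fderiv ℝ (Ptwo L) q w0 = G2 q := rfl
    simp only [ContinuousLinearMap.add_apply, ContinuousLinearMap.smul_apply,
      smul_eq_mul] at h
    rw [hdlamw q hq, hdaw q hq, e2, hG2a q hq] at h
    have hpsi : psiF q = 2 * lamF q + aF q := rfl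
    rw [show fderiv ℝ hFf q w0 = (fderiv ℝ (fun q' =>
      lamF q' * lamF q' + 2 * (aF q' * lamF q') + Ptwo L q') q) w0 from rfl]
    refine h.trans ?_; rw [hpsi]
    ring
  have hdψ : ∀ q ∈ V, fderiv ℝ psiF q w0 = (3 * a2 q - 2) * G1 q := by
    intro q hq
    have hD := (((hlamFd q hq).hasFDerivAt.const_mul 2).add (haFd q hq).hasFDerivAt).fderiv
    have h := congrArg (fun (T : E3 →L[ℝ] ℝ) => T w0) hD
    simp only [ContinuousLinearMap.add_apply, ContinuousLinearMap.smul_apply,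
      smul_eq_mul] at h
    rw [hdlamw q hq, hdaw q hq] at h
    rw [show fderiv ℝ psiF q w0 = (fderiv ℝ (fun q' => 2 * lamF q' + aF q') q) w0 from rfl]
    refine h.trans ?_
    ring
  -- continuity of a2
  have ha2cont : ContinuousOn a2 V := by
    have h1 : ContDiffOn ℝ (⊤ : ℕ∞) (fun q => fderiv ℝ aF q w0) V :=
      (haFs.fderiv_of_isOpen hVopen (by simp)).clm_apply contDiffOn_const
    exact (h1.continuousOn).div ((hG1s.continuousOn).mono hVU) hVG1
  -- pointwise trichotomy for a2
  have hval : ∀ q ∈ V, a2 q = 0 ∨ a2 q = 1/2 ∨ a2 q = 2/3 := by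
    intro q hqV
    by_cases hint : q ∈ interior {z | z ∈ V ∧ hFf z = 0}
    · by_cases ha : a2 q = 1/2
      · exact Or.inr (Or.inl ha)
      · refine Or.inr (Or.inr ?_)
        have hsub : ∀ z ∈ interior {z | z ∈ V ∧ hFf z = 0}, hFf z = 0 :=
          fun z hz => (interior_subset hz).2
        have hVsub : interior {z | z ∈ V ∧ hFf z = 0} ⊆ V := fun z hz => (interior_subset hz).1
        have hzero : ∀ z ∈ interior {z | z ∈ V ∧ hFf z = 0},
            (2 * a2 z - 1) * psiF z * G1 z = 0 := by
          intro z hz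
          have hfz : fderiv ℝ hFf z = 0 := by
            have hev : hFf =ᶠ[nhds z] (fun _ => (0:ℝ)) :=
              Filter.eventuallyEq_of_mem (isOpen_interior.mem_nhds hz)
                (fun y hy => hsub y hy)
            rw [hev.fderiv_eq]
            exact fderiv_const_apply 0
          have h := hdh z (hVsub hz)
          rw [hfz] at h
          simpa using h.symm
        have hcontat : ContinuousAt a2 q := ha2cont.continuousAt (hVopen.mem_nhds hqV)
        have h1 : ∀ᶠ z in nhds q, 2 * a2 z - 1 ≠ 0 := by
          have hc : ContinuousAt (fun z => 2 * a2 z - 1) q :=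
            (continuousAt_const.mul hcontat).sub continuousAt_const
          refine hc.eventually_ne ?_
          intro hcontra
          exact ha (by linarith)
        have h2 : ∀ᶠ z in nhds q, z ∈ interior {z | z ∈ V ∧ hFf z = 0} :=
          isOpen_interior.mem_nhds hint
        have hev : psiF =ᶠ[nhds q] (fun _ => (0:ℝ)) := by
          filter_upwards [h1, h2] with z hz1 hz2
          have h := hzero z hz2
          rcases mul_eq_zero.1 h with h' | h'
          · rcases mul_eq_zero.1 h' with h'' | h''
            · exact absurd h'' hz1
            · exact h''
          · exact absurd h' (hVG1 z (hVsub hz2))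
        have hfψ : fderiv ℝ psiF q = 0 := by
          rw [hev.fderiv_eq]
          exact fderiv_const_apply 0
        have h := hdψ q hqV
        rw [hfψ] at h
        simp only [ContinuousLinearMap.zero_apply] at h
        have h3 : 3 * a2 q - 2 = 0 := by
          rcases mul_eq_zero.1 h.symm with h' | h'
          · exact h'
          · exact absurd h' (hVG1 q hqV)
        linarith
    · left
      by_contra h0
      have hcontat : ContinuousAt a2 q := ha2cont.continuousAt (hVopen.mem_nhds hqV)
      have h1 : ∀ᶠ z in nhds q, a2 z ≠ 0 := hcontat.eventually_ne h0
      have h2 : ∀ᶠ z in nhds q, z ∈ V := hVopen.mem_nhds hqV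
      have hmem : ∀ᶠ z in nhds q, z ∈ {z | z ∈ V ∧ hFf z = 0} := by
        filter_upwards [h1, h2] with z hz1 hz2
        refine ⟨hz2, ?_⟩
        rcases mul_eq_zero.1 (key0 z hz2) with h | h
        · exact absurd h hz1
        · exact h
      exact hint (mem_interior_iff_mem_nhds.2 hmem)
  -- a2 is constant on V
  have hconst : ∀ y ∈ V, a2 y = a2 p := by
    intro y hy
    by_contra hne
    set f : ℝ → ℝ := fun t => a2 (p + t • (y - p)) with hfdef
    have hseg : ∀ t ∈ Icc (0:ℝ) 1, p + t • (y - p) ∈ V := by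
      intro t ht
      have h := hVconv hpV hy (by linarith [ht.1, ht.2] : (0:ℝ) ≤ 1 - t) ht.1 (by ring)
      have he : (1 - t) • p + t • y = p + t • (y - p) := by
        funext i
        simp [Pi.smul_apply, smul_eq_mul, Pi.add_apply, Pi.sub_apply]
        ring
      rwa [he] at h
    have hcf : ContinuousOn f (Icc (0:ℝ) 1) := by
      refine ContinuousOn.comp ha2cont ?_ ?_
      · exact (continuous_const.add (continuous_id.smul continuous_const)).continuousOn
      · intro t ht
        exact hseg t ht
    have hf0 : f 0 = a2 p := by simp [hfdef]
    have hf1 : f 1 = a2 y := by simp [hfdef]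
    have hvals : ∀ t ∈ Icc (0:ℝ) 1, f t = 0 ∨ f t = 1/2 ∨ f t = 2/3 :=
      fun t ht => hval _ (hseg t ht)
    set m : ℝ := (a2 p + a2 y) / 2 with hmdef
    have hmnot : ¬(m = 0 ∨ m = 1/2 ∨ m = 2/3) := by
      rcases hval p hpV with h1 | h1 | h1 <;> rcases hval y hy with h2 | h2 | h2 <;>
        rw [hmdef, h1, h2] <;> rw [h1, h2] at hne <;> revert hne <;> norm_num
    rcases le_or_gt (a2 p) (a2 y) with hle | hlt
    · have hm : m ∈ Icc (f 0) (f 1) := by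
        rw [hf0, hf1]
        constructor <;> [skip; skip] <;> rw [hmdef] <;> linarith
      obtain ⟨t, ht, hft⟩ := intermediate_value_Icc (by norm_num : (0:ℝ) ≤ 1) hcf hm
      exact hmnot (by rw [← hft]; exact hvals t ht)
    · have hm : m ∈ Icc (f 1) (f 0) := by
        rw [hf0, hf1]
        constructor <;> [skip; skip] <;> rw [hmdef] <;> linarith
      obtain ⟨t, ht, hft⟩ := intermediate_value_Icc' (by norm_num : (0:ℝ) ≤ 1) hcf hm
      exact hmnot (by rw [← hft]; exact hvals t ht)
  -- the three branches
  refine ⟨V, hVopen, hpV, hVU, ?_⟩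
  rcases hval p hpV with hc0 | hc0 | hc0
  -- ============ branch 1 : a2 ≡ 0 ============
  · left
    have ha2zero : ∀ q ∈ V, a2 q = 0 := fun q hq => (hconst q hq).trans hc0
    have hafderiv : ∀ q ∈ V, fderivWithin ℝ aF V q = 0 := by
      intro q hq
      rw [fderivWithin_of_isOpen hVopen hq]
      refine ContinuousLinearMap.ext fun u => ?_
      rw [ha2full q hq u, ha2zero q hq]
      simp
    have haconst : ∀ q ∈ V, aF q = aF p := fun q hq =>
      hVconv.is_const_of_fderivWithin_eq_zero (haFs.differentiableOn (by simp))
        hafderiv hq hpV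
    have hKd : ∀ q ∈ V, fderivWithin ℝ (fun z => Ptwo L z - aF p * Pone L z) V q = 0 := by
      intro q hq
      rw [fderivWithin_of_isOpen hVopen hq]
      have hD := ((hP2d q (hVU hq)).hasFDerivAt.sub
        ((hP1d q (hVU hq)).hasFDerivAt.const_mul (aF p))).fderiv
      rw [show fderiv ℝ (fun z => Ptwo L z - aF p * Pone L z) q = _ from hD]
      refine ContinuousLinearMap.ext fun u => ?_
      simp only [ContinuousLinearMap.sub_apply, ContinuousLinearMap.smul_apply,
        ContinuousLinearMap.zero_apply, smul_eq_mul]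
      have h1 := congrArg (fun (T : E3 →L[ℝ] ℝ) => T u) (hprop2 q hq).1
      simp only [ContinuousLinearMap.smul_apply, smul_eq_mul] at h1
      rw [h1, haconst q hq]
      ring
    have hKs : ContDiffOn ℝ (⊤ : ℕ∞) (fun z => Ptwo L z - aF p * Pone L z) V :=
      (hQ2.mono hVU).sub (contDiffOn_const.mul (hQ1.mono hVU))
    have hKconst : ∀ q ∈ V, Ptwo L q - aF p * Pone L q = Ptwo L p - aF p * Pone L p :=
      fun q hq => hVconv.is_const_of_fderivWithin_eq_zero (hKs.differentiableOn (by simp))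
        hKd hq hpV
    refine ⟨-(aF p), -((aF p)^2 + (Ptwo L p - aF p * Pone L p)), ?_⟩
    intro q hq
    have hσ2q : σ2 q = Ptwo L q := hs2 q (hVU hq)
    have hσ3q : σ3 q = Pthree L q := hs3 q (hVU hq)
    have hσ1q : σ1 q = Pone L q := hs1 q (hVU hq)
    constructor
    · rw [hσ2q, hσ1q]
      linear_combination hKconst q hq
    · rw [hσ3q, hσ1q]
      have hlam : lamF q = aF q - Pone L q := rfl
      have hb : bF q = aF q * lamF q + Ptwo L q := by linarith [hk2 q hq]
      have h3 : Pthree L q = -((aF q * lamF q + Ptwo L q) * lamF q) := by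
        rw [← hb]; linarith [hk3 q hq]
      rw [h3, hlam, haconst q hq]
      linear_combination (Pone L q - aF p) * (hKconst q hq)
  -- ============ branch 2 : a2 ≡ 1/2 ============
  · right; right
    have ha2half : ∀ q ∈ V, a2 q = 1/2 := fun q hq => (hconst q hq).trans hc0
    have hFzero : ∀ q ∈ V, hFf q = 0 := by
      intro q hq
      rcases mul_eq_zero.1 (key0 q hq) with h | h
      · rw [ha2half q hq] at h; norm_num at h
      · exact h
    have hkapd : ∀ q ∈ V, fderivWithin ℝ (fun z => aF z - (1/2) * Pone L z) V q = 0 := by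
      intro q hq
      rw [fderivWithin_of_isOpen hVopen hq]
      have hD := ((haFd q hq).hasFDerivAt.sub
        (((hP1d q (hVU hq)).hasFDerivAt).const_mul ((1:ℝ)/2))).fderiv
      rw [show fderiv ℝ (fun z => aF z - (1/2) * Pone L z) q = _ from hD]
      refine ContinuousLinearMap.ext fun u => ?_
      simp only [ContinuousLinearMap.sub_apply, ContinuousLinearMap.smul_apply,
        ContinuousLinearMap.zero_apply, smul_eq_mul]
      rw [ha2full q hq u, ha2half q hq]
      ring
    have hkaps : ContDiffOn ℝ (⊤ : ℕ∞) (fun z => aF z - (1/2) * Pone L z) V :=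
      haFs.sub (contDiffOn_const.mul (hQ1.mono hVU))
    have hkapconst : ∀ q ∈ V, aF q - (1/2) * Pone L q = aF p - (1/2) * Pone L p :=
      fun q hq => hVconv.is_const_of_fderivWithin_eq_zero (hkaps.differentiableOn (by simp))
        hkapd hq hpV
    refine ⟨3 * (aF p - (1/2) * Pone L p), ?_⟩
    intro q hq
    have hσ2q : σ2 q = Ptwo L q := hs2 q (hVU hq)
    have hσ3q : σ3 q = Pthree L q := hs3 q (hVU hq)
    have hσ1q : σ1 q = Pone L q := hs1 q (hVU hq)
    have hlam : lamF q = aF q - Pone L q := rfl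
    have hhq : lamF q * lamF q + 2 * (aF q * lamF q) + Ptwo L q = 0 := hFzero q hq
    rw [hlam] at hhq
    have haq2 : aF q = (aF p - (1/2) * Pone L p) + (1/2) * Pone L q := by
      have := hkapconst q hq; linarith
    rw [haq2] at hhq
    have hP2val : Ptwo L q = (-(Pone L q))^2/4
        - (3 * (aF p - (1/2) * Pone L p)) * (-(Pone L q))/3
        - (3 * (aF p - (1/2) * Pone L p))^2/3 := by
      linear_combination hhq
    constructor
    · rw [hσ2q, hσ1q]
      exact hP2val
    · rw [hσ3q, hσ1q]
      have hb : bF q = aF q * lamF q + Ptwo L q := by linarith [hk2 q hq]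
      have h3 : Pthree L q = -((aF q * lamF q + Ptwo L q) * lamF q) := by
        rw [← hb]; linarith [hk3 q hq]
      rw [h3, hlam, haq2, hP2val]
      ring
  -- ============ branch 3 : a2 ≡ 2/3 ============
  · right; left
    have ha2t : ∀ q ∈ V, a2 q = 2/3 := fun q hq => (hconst q hq).trans hc0
    have hFzero : ∀ q ∈ V, hFf q = 0 := by
      intro q hq
      rcases mul_eq_zero.1 (key0 q hq) with h | h
      · rw [ha2t q hq] at h; norm_num at h
      · exact h
    have hpsizero : ∀ q ∈ V, psiF q = 0 := by
      intro q hq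
      have hfz : fderiv ℝ hFf q = 0 := by
        have hev : hFf =ᶠ[nhds q] (fun _ => (0:ℝ)) :=
          Filter.eventuallyEq_of_mem (hVopen.mem_nhds hq) (fun z hz => hFzero z hz)
        rw [hev.fderiv_eq]
        exact fderiv_const_apply 0
      have h := hdh q hq
      rw [hfz] at h
      simp only [ContinuousLinearMap.zero_apply] at h
      have h2 : (2 * a2 q - 1) * psiF q = 0 := by
        rcases mul_eq_zero.1 h.symm with h' | h'
        · exact h'
        · exact absurd h' (hVG1 q hq)
      rcases mul_eq_zero.1 h2 with h' | h'
      · rw [ha2t q hq] at h'; norm_num at h'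
      · exact h'
    intro q hq
    have hσ2q : σ2 q = Ptwo L q := hs2 q (hVU hq)
    have hσ3q : σ3 q = Pthree L q := hs3 q (hVU hq)
    have hσ1q : σ1 q = Pone L q := hs1 q (hVU hq)
    have hlam : lamF q = aF q - Pone L q := rfl
    have hhq : lamF q * lamF q + 2 * (aF q * lamF q) + Ptwo L q = 0 := hFzero q hq
    have hpsiq : 2 * lamF q + aF q = 0 := hpsizero q hq
    have haq : aF q = 2 * Pone L q / 3 := by
      rw [hlam] at hpsiq; linarith
    have hlamq : lamF q = -(Pone L q) / 3 := by
      rw [hlam, haq]; ring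
    constructor
    · rw [hσ2q, hσ1q]
      rw [hlamq, haq] at hhq
      linear_combination hhq
    · rw [hσ3q, hσ1q]
      have hb : bF q = aF q * lamF q + Ptwo L q := by linarith [hk2 q hq]
      have h3 : Pthree L q = -((aF q * lamF q + Ptwo L q) * lamF q) := by
        rw [← hb]; linarith [hk3 q hq]
      rw [h3, hlamq, haq]
      rw [hlamq, haq] at hhq
      linear_combination (Pone L q / 3) * hhq
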